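/- Let C be a monoidal category, σ a pre-braiding in C, and F = {F_{A,B} ∈ Aut_C(A⊗B)} a cocycle (i.e. F_{A⊗B,C} ∘ (F_{A,B} ⊗ id_C) = F_{A,B⊗C} ∘ (id_A ⊗ F_{B,C}) and F_{A,1} = id = F_{1,A}) that respects morphisms of the subcategory C_σ (i.e. F ∘ (f⊗g) = (f⊗g) ∘ F for f, g ∈ Hom C_σ). Then the family σ̄_{A,B} := F_{B,A}⁻¹ ∘ σ_{A,B} ∘ F_{A,B} satisfies the Yang–Baxter equation: σ̄_{A,B}σ̄_{A,C}σ̄_{B,C} = σ̄_{B,C}σ̄_{A,C}σ̄_{A,B} (with appropriate identity tensor factors inserted). -/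

import Mathlib

/-!
STATEMENT 7: Let `C` be a monoidal category, `σ` a pre-braiding in `C`, and
`F = {F_{A,B} ∈ Aut(A⊗B)}` a cocycle (normalized, satisfying the cocycle condition)
that respects morphisms of the subcategory `C_σ`.  Then the family
`σ̄_{A,B} := F_{B,A}⁻¹ ∘ σ_{A,B} ∘ F_{A,B}` satisfies the Yang–Baxter equation.
-/

open CategoryTheory MonoidalCategory

universe v u

variable {C : Type u} [Category.{v} C] [MonoidalCategory C]

/-- The membership predicate for morphisms of the subcategory `C_σ`. -/
def IsSigmaMor (σ : ∀ A B : C, A ⊗ B ≅ B ⊗ A) {A B : C} (f : A ⟶ B) : Prop :=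
  ∀ X : C, ((f ▷ X) ≫ (σ B X).hom = (σ A X).hom ≫ (X ◁ f)) ∧
    ((X ◁ f) ≫ (σ X B).hom = (σ X A).hom ≫ (f ▷ X))

/-- The Yang–Baxter equation for a family of morphisms `s_{A,B} : A⊗B ⟶ B⊗A`. -/
def SatisfiesYBhom (s : ∀ A B : C, A ⊗ B ⟶ B ⊗ A) : Prop :=
  ∀ A B X : C,
    ((s A B) ▷ X) ≫ (α_ B A X).hom ≫ (B ◁ (s A X)) ≫ (α_ B X A).inv ≫
        ((s B X) ▷ A) ≫ (α_ X B A).hom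
      = (α_ A B X).hom ≫ (A ◁ (s B X)) ≫ (α_ A X B).inv ≫ ((s A X) ▷ B) ≫
          (α_ X A B).hom ≫ (X ◁ (s A B))

/-- The two hexagon identities for a family `σ`. -/
def SatisfiesHexagons (σ : ∀ A B : C, A ⊗ B ≅ B ⊗ A) : Prop :=
  (∀ A B X : C, (σ (A ⊗ B) X).hom
      = (α_ A B X).hom ≫ (A ◁ (σ B X).hom) ≫ (α_ A X B).inv ≫ ((σ A X).hom ▷ B) ≫
          (α_ X A B).hom) ∧
  (∀ X A B : C, (σ X (A ⊗ B)).hom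
      = (α_ X A B).inv ≫ ((σ X A).hom ▷ B) ≫ (α_ A X B).hom ≫ (A ◁ (σ X B).hom) ≫
          (α_ A B X).inv)

/-!
Let `Φ_{A,B,X} = F_{A⊗B,X} ∘ (F_{A,B} ⊗ id)` be the twist on triple products; by the cocycle
condition it also equals `α⁻¹ ∘ F_{A,B⊗X} ∘ (id ⊗ F_{B,X}) ∘ α`. Since `σ` lies in `C_σ` (the
hexagons turn the defining conditions into the Yang–Baxter equation), `F` commutes with
`σ ⊗ id` and `id ⊗ σ`, so each factor `σ̄ ⊗ id`, `id ⊗ σ̄` of the Yang–Baxter equation for `σ̄` is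
conjugate under `Φ` to the matching factor for `σ`. Both sides of the equation for `σ̄` are
therefore `Φ`-conjugates of the two sides of the equation for `σ`.
-/

lemma SatisfiesYBhom.of_intertwining {s t : ∀ A B : C, A ⊗ B ⟶ B ⊗ A}
    (Φ : ∀ A B X : C, (A ⊗ B) ⊗ X ≅ (A ⊗ B) ⊗ X)
    (hright : ∀ A B X : C, (t A B ▷ X) ≫ (Φ B A X).hom = (Φ A B X).hom ≫ (s A B ▷ X))
    (hleft : ∀ A B X : C,
      (α_ A B X).hom ≫ (A ◁ t B X) ≫ (α_ A X B).inv ≫ (Φ A X B).hom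
        = (Φ A B X).hom ≫ (α_ A B X).hom ≫ (A ◁ s B X) ≫ (α_ A X B).inv)
    (hs : SatisfiesYBhom s) : SatisfiesYBhom t := by
  intro A B X
  rw [← cancel_mono ((α_ X B A).inv ≫ (Φ X B A).hom)]
  simp only [Category.assoc, Iso.hom_inv_id_assoc]
  rw [hright B X A, reassoc_of% hleft B A X, reassoc_of% hright A B X, hleft X A B,
    reassoc_of% hright A X B, reassoc_of% hleft A B X]
  rw [cancel_epi, ← cancel_mono (α_ X B A).hom]
  simpa only [Category.assoc, Iso.inv_hom_id, Category.comp_id] using hs A B X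

lemma isSigmaMor_id (σ : ∀ A B : C, A ⊗ B ≅ B ⊗ A) (A : C) : IsSigmaMor σ (𝟙 A) :=
  fun X => by simp

-- Through the hexagon identities both conditions become instances of the Yang–Baxter equation.
lemma isSigmaMor_hom {σ : ∀ A B : C, A ⊗ B ≅ B ⊗ A}
    (hYB : SatisfiesYBhom fun A B => (σ A B).hom) (hHex : SatisfiesHexagons σ) (A B : C) :
    IsSigmaMor σ (σ A B).hom := by
  intro X
  constructor
  · rw [hHex.1 A B X, hHex.1 B A X]
    simpa only [Category.assoc] using hYB A B X
  · rw [hHex.2 X A B, hHex.2 X B A, ← cancel_epi (α_ X A B).hom, ← cancel_mono (α_ B A X).hom]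
    simpa only [Category.assoc, Iso.inv_hom_id, Category.comp_id, Iso.hom_inv_id_assoc]
      using (hYB X A B).symm

def IsCocycle (F : ∀ A B : C, A ⊗ B ≅ A ⊗ B) : Prop :=
  ∀ A B X : C, ((F A B).hom ▷ X) ≫ (F (A ⊗ B) X).hom ≫ (α_ A B X).hom
    = (α_ A B X).hom ≫ (A ◁ (F B X).hom) ≫ (F A (B ⊗ X)).hom

section Twist

variable (F : ∀ A B : C, A ⊗ B ≅ A ⊗ B) (s : ∀ A B : C, A ⊗ B ⟶ B ⊗ A)

def twist (A B : C) : A ⊗ B ⟶ B ⊗ A := (F A B).hom ≫ s A B ≫ (F B A).inv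

def twistTriple (A B X : C) : (A ⊗ B) ⊗ X ≅ (A ⊗ B) ⊗ X :=
  whiskerRightIso (F A B) X ≪≫ F (A ⊗ B) X

variable {F s}

lemma twist_whiskerRight_comp_twistTriple
    (hright : ∀ A B X : C,
      (s A B ▷ X) ≫ (F (B ⊗ A) X).hom = (F (A ⊗ B) X).hom ≫ (s A B ▷ X))
    (A B X : C) :
    (twist F s A B ▷ X) ≫ (twistTriple F B A X).hom
      = (twistTriple F A B X).hom ≫ (s A B ▷ X) := by
  simp [twist, twistTriple, hright]

lemma twistTriple_hom_eq (hcoc : IsCocycle F) (A B X : C) :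
    (twistTriple F A B X).hom
      = (α_ A B X).hom ≫ (A ◁ (F B X).hom) ≫ (F A (B ⊗ X)).hom ≫ (α_ A B X).inv := by
  rw [← reassoc_of% hcoc A B X, Iso.hom_inv_id, Category.comp_id]
  rfl

lemma twist_whiskerLeft_comp_twistTriple
    (hcoc : IsCocycle F)
    (hleft : ∀ X A B : C,
      (X ◁ s A B) ≫ (F X (B ⊗ A)).hom = (F X (A ⊗ B)).hom ≫ (X ◁ s A B))
    (A B X : C) :
    (α_ A B X).hom ≫ (A ◁ twist F s B X) ≫ (α_ A X B).inv ≫ (twistTriple F A X B).hom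
      = (twistTriple F A B X).hom ≫ (α_ A B X).hom ≫ (A ◁ s B X) ≫ (α_ A X B).inv := by
  rw [twistTriple_hom_eq hcoc, twistTriple_hom_eq hcoc]
  simp [twist, reassoc_of% hleft]

lemma SatisfiesYBhom.twist (hs : SatisfiesYBhom s)
    (hcoc : IsCocycle F)
    (hright : ∀ A B X : C,
      (s A B ▷ X) ≫ (F (B ⊗ A) X).hom = (F (A ⊗ B) X).hom ≫ (s A B ▷ X))
    (hleft : ∀ X A B : C,
      (X ◁ s A B) ≫ (F X (B ⊗ A)).hom = (F X (A ⊗ B)).hom ≫ (X ◁ s A B)) :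
    SatisfiesYBhom (twist F s) :=
  hs.of_intertwining (twistTriple F) (twist_whiskerRight_comp_twistTriple hright)
    (twist_whiskerLeft_comp_twistTriple hcoc hleft)

end Twist

theorem statement7 (σ : ∀ A B : C, A ⊗ B ≅ B ⊗ A)
    (hYB : SatisfiesYBhom (fun A B => (σ A B).hom)) (hHex : SatisfiesHexagons σ)
    (F : ∀ A B : C, A ⊗ B ≅ A ⊗ B)
    -- the cocycle condition (with the associator inserted):
    (hcoc : ∀ A B X : C,
      ((F A B).hom ▷ X) ≫ (F (A ⊗ B) X).hom ≫ (α_ A B X).hom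
        = (α_ A B X).hom ≫ (A ◁ (F B X).hom) ≫ (F A (B ⊗ X)).hom)
    -- `F` respects morphisms of `C_σ`:
    (hresp : ∀ {A B A' B' : C} (f : A ⟶ A') (g : B ⟶ B'),
      IsSigmaMor σ f → IsSigmaMor σ g →
      (f ⊗ₘ g) ≫ (F A' B').hom = (F A B).hom ≫ (f ⊗ₘ g)) :
    SatisfiesYBhom (fun A B => (F A B).hom ≫ (σ A B).hom ≫ (F B A).inv) := by
  have hσ := isSigmaMor_hom hYB hHex
  refine hYB.twist hcoc (fun A B X => ?_) (fun X A B => ?_)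
  · simpa only [tensorHom_id] using hresp _ _ (hσ A B) (isSigmaMor_id σ X)
  · simpa only [id_tensorHom] using hresp _ _ (isSigmaMor_id σ X) (hσ A B)
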